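/- arXiv:1802.03918 — 2 statements merged into one kernel-verified Lean document; each statement's English description precedes it below -/
import Mathlib

section
/- Let T be a simple graph with an edge-coloring c that contains no rainbow matching of size 5, and let G be a rainbow subgraph of T (i.e., all edges of G receive pairwise distinct colors under c). Suppose G contains two edge-disjoint matchings M₁ and M₂, each of size 4. Then T has no edge whose two endpoints both lie outside the set of vertices covered by M₁ ∪ M₂; that is, every edge of T has at least one endpoint in V(M₁) ∪ V(M₂). -/
/-- A topological planar embedding of a simple graph `G`: an injective placement `f` of the
vertices in the plane together with, for each edge, an arc `γ e : ℝ → ℝ × ℝ` that is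
continuous and injective on `[0,1]`, joins the images of the two endpoints of the edge,
whose interior avoids all vertex images, and such that interiors of distinct arcs are
pairwise disjoint. -/
def SimpleGraph.IsPlanarEmbedding {V : Type*} (G : SimpleGraph V) (f : V → ℝ × ℝ)
    (γ : G.edgeSet → ℝ → ℝ × ℝ) : Prop :=
  Function.Injective f ∧
  (∀ e : G.edgeSet, ContinuousOn (γ e) (Set.Icc 0 1)) ∧
  (∀ e : G.edgeSet, Set.InjOn (γ e) (Set.Icc 0 1)) ∧
  (∀ e : G.edgeSet, ∃ u v : V, (e : Sym2 V) = s(u, v) ∧ γ e 0 = f u ∧ γ e 1 = f v) ∧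
  (∀ e : G.edgeSet, ∀ t ∈ Set.Ioo (0 : ℝ) 1, ∀ v : V, γ e t ≠ f v) ∧
  (∀ e₁ e₂ : G.edgeSet, e₁ ≠ e₂ → ∀ t₁ ∈ Set.Ioo (0 : ℝ) 1, ∀ t₂ ∈ Set.Ioo (0 : ℝ) 1,
      γ e₁ t₁ ≠ γ e₂ t₂)

/-- A simple graph is planar if it admits a topological planar embedding. -/
def SimpleGraph.IsPlanar {V : Type*} (G : SimpleGraph V) : Prop :=
  ∃ f γ, G.IsPlanarEmbedding f γ

/-- A plane triangulation on `n` vertices: a maximal planar simple graph on `n ≥ 3`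
vertices, i.e. a planar graph with exactly `3n - 6` edges. -/
def IsPlaneTriangulation {n : ℕ} (G : SimpleGraph (Fin n)) : Prop :=
  3 ≤ n ∧ G.IsPlanar ∧ G.edgeSet.ncard = 3 * n - 6

/-- `M` is a matching of size `k` in `G` (a copy of `kK₂`): a set of `k` pairwise
vertex-disjoint edges of `G`. -/
def IsMatchingOfSize {V : Type*} (G : SimpleGraph V) (M : Finset (Sym2 V)) (k : ℕ) : Prop :=
  M.card = k ∧ (↑M : Set (Sym2 V)) ⊆ G.edgeSet ∧
    ∀ e ∈ M, ∀ e' ∈ M, e ≠ e' → ∀ v : V, v ∈ e → v ∉ e'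

/-- Under the edge-coloring `c`, the graph `G` contains a rainbow matching of size `k`. -/
def HasRainbowMatching {V α : Type*} (G : SimpleGraph V) (c : Sym2 V → α) (k : ℕ) : Prop :=
  ∃ M : Finset (Sym2 V), IsMatchingOfSize G M k ∧ Set.InjOn c (↑M : Set (Sym2 V))

/-- `r` colors suffice for rainbow `kK₂` in every plane triangulation on `n` vertices:
every edge-coloring of such a triangulation using at least `r` distinct colors contains
a rainbow matching of size `k`. -/
def RainbowThreshold (n k r : ℕ) : Prop :=
  ∀ G : SimpleGraph (Fin n), IsPlaneTriangulation G →
    ∀ c : Sym2 (Fin n) → ℕ, r ≤ (c '' G.edgeSet).ncard → HasRainbowMatching G c k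

lemma extend_matching_aux {V : Type*} [DecidableEq V]
    (T G : SimpleGraph V) (hGT : G ≤ T) (c : Sym2 V → ℕ)
    (hrbG : Set.InjOn c G.edgeSet)
    (M : Finset (Sym2 V)) (hM : IsMatchingOfSize G M 4)
    (u v : V) (huv : T.Adj u v)
    (hu : ∀ e ∈ M, u ∉ e) (hv : ∀ e ∈ M, v ∉ e)
    (hc : ∀ e ∈ M, c e ≠ c s(u, v)) :
    HasRainbowMatching T c 5 := by
  have hnot : s(u, v) ∉ M := fun h => hu _ h (by simp)
  refine ⟨insert s(u, v) M, ⟨?_, ?_, ?_⟩, ?_⟩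
  · rw [Finset.card_insert_of_notMem hnot, hM.1]
  · intro e he
    simp only [Finset.coe_insert, Set.mem_insert_iff] at he
    rcases he with rfl | he
    · exact huv
    · exact SimpleGraph.edgeSet_mono hGT (hM.2.1 he)
  · intro e he e' he' hne w hw
    rw [Finset.mem_insert] at he he'
    rcases he with rfl | he <;> rcases he' with rfl | he'
    · exact absurd rfl hne
    · rcases Sym2.mem_iff.mp hw with rfl | rfl
      · exact hu _ he'
      · exact hv _ he'
    · intro hw'
      rcases Sym2.mem_iff.mp hw' with rfl | rfl
      · exact hu _ he hw
      · exact hv _ he hw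
    · exact hM.2.2 e he e' he' hne w hw
  · intro x hx y hy hxy
    simp only [Finset.coe_insert, Set.mem_insert_iff] at hx hy
    rcases hx with rfl | hx <;> rcases hy with rfl | hy
    · rfl
    · exact absurd hxy.symm (hc _ hy)
    · exact absurd hxy (hc _ hx)
    · exact hrbG (hM.2.1 hx) (hM.2.1 hy) hxy

/-- If an edge-coloring `c` of a finite simple graph `T` admits no rainbow matching of
size 5, `G ≤ T` is a rainbow subgraph, and `G` contains two edge-disjoint matchings
`M₁, M₂` of size 4, then every edge of `T` has at least one endpoint covered by
`M₁ ∪ M₂`. -/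
theorem no_edge_outside_two_disjoint_fourMatchings {V : Type*} [Fintype V] [DecidableEq V]
    (T G : SimpleGraph V) (hGT : G ≤ T) (c : Sym2 V → ℕ)
    (hrbG : Set.InjOn c G.edgeSet)
    (hno : ¬ HasRainbowMatching T c 5)
    (M₁ M₂ : Finset (Sym2 V))
    (hM₁ : IsMatchingOfSize G M₁ 4) (hM₂ : IsMatchingOfSize G M₂ 4)
    (hdisj : Disjoint M₁ M₂)
    (u v : V) (huv : T.Adj u v) :
    (∃ e ∈ M₁ ∪ M₂, u ∈ e) ∨ (∃ e ∈ M₁ ∪ M₂, v ∈ e) := by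
  by_contra h
  push_neg at h
  obtain ⟨h1, h2⟩ := h
  simp only [Finset.mem_union] at h1 h2
  have hu1 : ∀ e ∈ M₁, u ∉ e := fun e he => h1 e (Or.inl he)
  have hu2 : ∀ e ∈ M₂, u ∉ e := fun e he => h1 e (Or.inr he)
  have hv1 : ∀ e ∈ M₁, v ∉ e := fun e he => h2 e (Or.inl he)
  have hv2 : ∀ e ∈ M₂, v ∉ e := fun e he => h2 e (Or.inr he)
  apply hno
  have key : (∀ e ∈ M₁, c e ≠ c s(u, v)) ∨ (∀ e ∈ M₂, c e ≠ c s(u, v)) := by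
    by_contra hk
    push_neg at hk
    obtain ⟨⟨e₁, he₁, hc₁⟩, ⟨e₂, he₂, hc₂⟩⟩ := hk
    have heq : e₁ = e₂ := hrbG (hM₁.2.1 he₁) (hM₂.2.1 he₂) (hc₁.trans hc₂.symm)
    exact (Finset.disjoint_left.mp hdisj he₁) (heq ▸ he₂)
  rcases key with hk | hk
  · exact extend_matching_aux T G hGT c hrbG M₁ hM₁ u v huv hu1 hv1 hk
  · exact extend_matching_aux T G hGT c hrbG M₂ hM₂ u v huv hu2 hv2 hk
end

section
/- Let T be a simple graph with an edge-coloring c that contains no rainbow matching of size 5, and let G be a rainbow subgraph of T (all edges of G receive pairwise distinct colors under c). Let e₁ be an edge of T and e₂ an edge of G such that e₁ and e₂ are vertex-disjoint. Suppose that the graph obtained from G by deleting the four endpoints of e₁ and e₂ contains two edge-disjoint matchings M₁ and M₂, each of size 3. Then c(e₁) = c(e₂). -/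
/-- If an edge-coloring `c` of a finite simple graph `T` admits no rainbow matching of
size 5, `G ≤ T` is a rainbow subgraph, `e₁` is an edge of `T` and `e₂` an edge of `G`
which are vertex-disjoint, and `G` minus the four endpoints of `e₁, e₂` contains two
edge-disjoint matchings of size 3, then `c e₁ = c e₂`. -/
theorem color_eq_of_two_disjoint_threeMatchings {V : Type*} [Fintype V] [DecidableEq V]
    (T G : SimpleGraph V) (hGT : G ≤ T) (c : Sym2 V → ℕ)
    (hrbG : Set.InjOn c G.edgeSet)
    (hno : ¬ HasRainbowMatching T c 5)
    (e₁ e₂ : Sym2 V) (he₁ : e₁ ∈ T.edgeSet) (he₂ : e₂ ∈ G.edgeSet)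
    (hvd : ∀ w : V, w ∈ e₁ → w ∉ e₂)
    (M₁ M₂ : Finset (Sym2 V))
    (hM₁ : IsMatchingOfSize G M₁ 3) (hM₂ : IsMatchingOfSize G M₂ 3)
    (hdisj : Disjoint M₁ M₂)
    (havoid : ∀ e ∈ M₁ ∪ M₂, ∀ w : V, w ∈ e → w ∉ e₁ ∧ w ∉ e₂) :
    c e₁ = c e₂ := by
  by_contra hne
  apply hno
  -- choose a 3-matching M ⊆ M₁ ∪ M₂ avoiding the color of e₁
  have key : ∃ M : Finset (Sym2 V), IsMatchingOfSize G M 3 ∧ M ⊆ M₁ ∪ M₂ ∧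
      ∀ m ∈ M, c m ≠ c e₁ := by
    by_cases h : ∀ m ∈ M₁, c m ≠ c e₁
    · exact ⟨M₁, hM₁, Finset.subset_union_left, h⟩
    · push_neg at h
      obtain ⟨m₀, hm₀, hcm₀⟩ := h
      refine ⟨M₂, hM₂, Finset.subset_union_right, fun m hm hc => ?_⟩
      have hmeq : m = m₀ := hrbG (hM₂.2.1 hm) (hM₁.2.1 hm₀) (hc.trans hcm₀.symm)
      exact Finset.disjoint_left.mp hdisj (hmeq ▸ hm₀) hm
  obtain ⟨M, hM, hMsub, hMc⟩ := key
  have hMG : (↑M : Set (Sym2 V)) ⊆ G.edgeSet := hM.2.1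
  have hTG : G.edgeSet ⊆ T.edgeSet := SimpleGraph.edgeSet_mono hGT
  have he₁M : e₁ ∉ M := fun h =>
    (havoid e₁ (hMsub h) e₁.out.1 (Sym2.out_fst_mem e₁)).1 (Sym2.out_fst_mem e₁)
  have he₂M : e₂ ∉ M := fun h =>
    (havoid e₂ (hMsub h) e₂.out.1 (Sym2.out_fst_mem e₂)).2 (Sym2.out_fst_mem e₂)
  have hne12 : e₁ ≠ e₂ := fun h =>
    hvd e₁.out.1 (Sym2.out_fst_mem e₁) (h ▸ Sym2.out_fst_mem e₁)
  refine ⟨insert e₁ (insert e₂ M), ⟨?_, ?_, ?_⟩, ?_⟩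
  · rw [Finset.card_insert_of_notMem, Finset.card_insert_of_notMem he₂M, hM.1]
    simp only [Finset.mem_insert]
    rintro (h | h)
    · exact hne12 h
    · exact he₁M h
  · intro e he
    simp only [Finset.coe_insert, Set.mem_insert_iff, Finset.mem_coe] at he
    rcases he with rfl | rfl | he
    · exact he₁
    · exact hTG he₂
    · exact hTG (hMG he)
  · intro e he e' he' hee' v hv hv'
    simp only [Finset.mem_insert] at he he'
    rcases he with rfl | rfl | he <;> rcases he' with rfl | rfl | he'
    · exact hee' rfl
    · exact hvd v hv hv'
    · exact (havoid e' (hMsub he') v hv').1 hv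
    · exact hvd v hv' hv
    · exact hee' rfl
    · exact (havoid e' (hMsub he') v hv').2 hv
    · exact (havoid e (hMsub he) v hv).1 hv'
    · exact (havoid e (hMsub he) v hv).2 hv'
    · exact hM.2.2 e he e' he' hee' v hv hv'
  · intro x hx y hy hxy
    simp only [Finset.coe_insert, Set.mem_insert_iff, Finset.mem_coe] at hx hy
    rcases hx with rfl | hx <;> rcases hy with rfl | hy
    · rfl
    · rcases hy with rfl | hy
      · exact absurd hxy hne
      · exact absurd hxy.symm (hMc y hy)
    · rcases hx with rfl | hx
      · exact absurd hxy.symm hne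
      · exact absurd hxy (hMc x hx)
    · have hxG : x ∈ G.edgeSet := by rcases hx with rfl | hx; exact he₂; exact hMG hx
      have hyG : y ∈ G.edgeSet := by rcases hy with rfl | hy; exact he₂; exact hMG hy
      exact hrbG hxG hyG hxy
end
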